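/- Pointwise coordinate bounds from the functional Q: there exists a constant C > 0 (depending only on d, U, K) such that for every configuration x ∈ X with Q(x) ≤ M < ∞ and every site i ∈ ℤ^d one has p_i² + U(q_i) ≤ C M log(e + |i|), q_i⁴ ≤ C M log(e + |i|), and |U''(q_i)| ≤ C (M log(e + |i|))^{1/2}. -/

import Mathlib

open MeasureTheory Real Filter
open scoped ENNReal

noncomputable section

/-- A site of the `d`-dimensional integer lattice. -/
abbrev Site (d : ℕ) := Fin d → ℤ

/-- A configuration: at each site, a position `q` and a momentum `p`. -/
abbrev Conf (d : ℕ) := Site d → ℝ × ℝ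

/-- ℓ¹ norm on the lattice. -/
def lnorm {d : ℕ} (ν : Site d) : ℤ := ∑ ℓ, |ν ℓ|

/-- ℓ¹ distance on the lattice. -/
def ldist {d : ℕ} (i j : Site d) : ℤ := ∑ ℓ, |i ℓ - j ℓ|

/-- The cube `Λ_{ν,k}` of center `ν` and side `2k+1`. -/
def cube {d : ℕ} (ν : Site d) (k : ℕ) : Finset (Site d) :=
  Fintype.piFinset fun ℓ => Finset.Icc (ν ℓ - (k : ℤ)) (ν ℓ + (k : ℤ))

/-- The local energy `W_{ν,k}(x)`. -/
noncomputable def Wen {d : ℕ} (U : Polynomial ℝ) (K : ℝ) (ν : Site d) (k : ℕ)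
    (x : Conf d) : ℝ :=
  (∑ i ∈ cube ν k, ((x i).2 ^ 2 / 2 + U.eval (x i).1 + 1)) +
    K / 4 * ∑ i ∈ cube ν k, ∑ j ∈ cube ν k,
      (if ldist i j = 1 then ((x i).1 - (x j).1) ^ 2 else 0)

/-- The functional `Q(x) = sup_ν sup_{k > log^{1/d}(e+|ν|)} W_{ν,k}(x)/(2k+1)^d`,
with values in `[0,∞]`. -/
noncomputable def Qen {d : ℕ} (U : Polynomial ℝ) (K : ℝ) (x : Conf d) : ℝ≥0∞ :=
  ⨆ ν : Site d, ⨆ k : ℕ,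
    ⨆ _ : Real.log (Real.exp 1 + (lnorm ν : ℝ)) ^ ((1 : ℝ) / (d : ℝ)) < (k : ℝ),
      ENNReal.ofReal (Wen U K ν k x / (2 * (k : ℝ) + 1) ^ d)

/-- The good set of configurations `X₀ = {x : Q(x) < ∞}`. -/
def X0 (d : ℕ) (U : Polynomial ℝ) (K : ℝ) : Set (Conf d) := {x | Qen U K x < ⊤}


/-!
Fix a site `i` and put `L = log (e + |i|) ≥ 1`. The smallest admissible cube around `i` has side
`2k + 1 ≤ 5 L^{1/d}`, so `Q(x) ≤ M` bounds the local energy `W_{i,k}(x)`, and with it the single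
term `p_i²/2 + U(q_i) + 1`, by `5^d M L`; since every site contributes at least `1` to `W`, also
`M ≥ 1`. The remaining estimates are pure polynomial growth: `q⁴ = O(U(q) + 1)` because
`deg U = 4`, and `U''(q) = O(q² + 1)` because `deg U'' ≤ 2`.
-/

open Asymptotics Bornology Polynomial Real

theorem Continuous.exists_norm_le_mul_norm_add_one_of_isBigO {E F G : Type*}
    [NormedAddCommGroup E] [ProperSpace E] [SeminormedAddCommGroup F] [SeminormedAddCommGroup G]
    {f : E → F} {g : E → G} (hf : Continuous f) (h : f =O[cobounded E] g) :
    ∃ c, 0 ≤ c ∧ ∀ x, ‖f x‖ ≤ c * (‖g x‖ + 1) := by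
  obtain ⟨c, hc₀, hc⟩ := h.exists_nonneg
  obtain ⟨r, hr⟩ := Filter.hasBasis_cobounded_norm.eventually_iff.mp hc.bound
  obtain ⟨B, hB⟩ :=
    (isCompact_closedBall (0 : E) r).exists_bound_of_continuousOn hf.continuousOn
  refine ⟨max c B, le_max_of_le_left hc₀, fun x => ?_⟩
  have hg : 0 ≤ ‖g x‖ := norm_nonneg _
  rcases le_total r ‖x‖ with hx | hx
  · nlinarith [hr.2 hx, le_max_left c B]
  · nlinarith [hB x (mem_closedBall_zero_iff.mpr hx), le_max_right c B, le_max_left c B]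

section PolynomialGrowth

variable {𝕜 : Type*} [NormedField 𝕜] [ProperSpace 𝕜]

theorem Polynomial.exists_norm_pow_le_mul_norm_eval_add_one {P : 𝕜[X]} {n : ℕ}
    (hn : (n : WithBot ℕ) ≤ P.degree) :
    ∃ c, 0 ≤ c ∧ ∀ x : 𝕜, ‖x‖ ^ n ≤ c * (‖P.eval x‖ + 1) := by
  simpa only [eval_pow, eval_X, norm_pow] using
    (X ^ n : 𝕜[X]).continuous.exists_norm_le_mul_norm_add_one_of_isBigO
      (isBigO_cobounded_of_degree_le ((degree_X_pow_le n).trans hn))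

theorem Polynomial.exists_norm_eval_le_mul_norm_pow_add_one {P : 𝕜[X]} {n : ℕ}
    (hn : P.degree ≤ n) :
    ∃ c, 0 ≤ c ∧ ∀ x : 𝕜, ‖P.eval x‖ ≤ c * (‖x‖ ^ n + 1) := by
  simpa only [eval_pow, eval_X, norm_pow] using
    P.continuous.exists_norm_le_mul_norm_add_one_of_isBigO
      (isBigO_cobounded_of_degree_le (hn.trans (degree_X_pow n).ge))

end PolynomialGrowth

theorem exists_coordinate_bounds_of_energy_le {U : ℝ[X]} (hUdeg : U.degree = 4)
    (hUpos : ∀ y : ℝ, 0 ≤ U.eval y) {a : ℝ} (ha : 0 ≤ a) :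
    ∃ C > (0 : ℝ), ∀ p q N : ℝ, 1 ≤ N → p ^ 2 / 2 + U.eval q + 1 ≤ a * N →
      p ^ 2 + U.eval q ≤ C * N ∧ q ^ 4 ≤ C * N ∧
        |(derivative (derivative U)).eval q| ≤ C * √N := by
  obtain ⟨A, hA₀, hA⟩ := U.exists_norm_pow_le_mul_norm_eval_add_one (n := 4) hUdeg.ge
  have hU'' : (derivative (derivative U)).degree ≤ (2 : ℕ) := by
    have := natDegree_iterate_derivative U 2
    rw [natDegree_eq_of_degree_eq_some hUdeg] at this
    exact degree_le_of_natDegree_le this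
  obtain ⟨B, hB₀, hB⟩ := (derivative (derivative U)).exists_norm_eval_le_mul_norm_pow_add_one hU''
  refine ⟨2 * a + A * a + B * (√(A * a) + 1) + 1, by positivity, fun p q N hN hE => ?_⟩
  have hu := hUpos q
  have hq4 : q ^ 4 ≤ A * a * N := by
    have := hA q
    rw [Real.norm_eq_abs, Real.norm_eq_abs, abs_of_nonneg hu, Even.pow_abs (by decide)] at this
    nlinarith
  have hq2 : |q| ^ 2 ≤ √(A * a) * √N := by
    rw [← sqrt_mul (by positivity), sq_abs]
    exact le_sqrt_of_sq_le (by linarith)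
  have h1N : 1 ≤ √N := one_le_sqrt.mpr hN
  have hAa : 0 ≤ A * a := by positivity
  have hB' : 0 ≤ B * (√(A * a) + 1) := by positivity
  refine ⟨by nlinarith [sq_nonneg p], by nlinarith [mul_nonneg ha (sq_nonneg p)], ?_⟩
  calc |(derivative (derivative U)).eval q| ≤ B * (|q| ^ 2 + 1) := by
        simpa only [Real.norm_eq_abs] using hB q
    _ ≤ B * (√(A * a) * √N + √N) := by gcongr
    _ = B * (√(A * a) + 1) * √N := by ring
    _ ≤ (2 * a + A * a + B * (√(A * a) + 1) + 1) * √N := by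
        gcongr
        linarith

theorem exists_nat_gt_rpow_and_pow_le {L : ℝ} (hL : 1 ≤ L) (d : ℕ) :
    ∃ k : ℕ, L ^ ((1 : ℝ) / d) < k ∧ (2 * (k : ℝ) + 1) ^ d ≤ 5 ^ d * L := by
  set R := L ^ ((1 : ℝ) / d) with hRdef
  have hR : 1 ≤ R := one_le_rpow hL (by positivity)
  have hRd : R ^ d ≤ L := by
    rcases eq_or_ne d 0 with rfl | hd
    · simpa using hL -- `1 / 0 = 0` in `ℝ`, so here `R = 1`
    · rw [hRdef, one_div, rpow_inv_natCast_pow (by linarith) hd]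
  refine ⟨⌊R⌋₊ + 1, by exact_mod_cast Nat.lt_floor_add_one R, ?_⟩
  calc (2 * ((⌊R⌋₊ + 1 : ℕ) : ℝ) + 1) ^ d ≤ (5 * R) ^ d := by
        gcongr
        push_cast
        linarith [Nat.floor_le (zero_le_one.trans hR)]
    _ = 5 ^ d * R ^ d := mul_pow _ _ _
    _ ≤ 5 ^ d * L := by gcongr

section Lattice

variable {d : ℕ}

theorem one_le_log_exp_one_add_lnorm (i : Site d) : 1 ≤ log (exp 1 + lnorm i) := by
  have : (0 : ℝ) ≤ lnorm i := by exact_mod_cast Finset.sum_nonneg fun ℓ _ => abs_nonneg (i ℓ)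
  rw [le_log_iff_exp_le (by positivity)]
  linarith

theorem card_cube (ν : Site d) (k : ℕ) : (cube ν k).card = (2 * k + 1) ^ d := by
  have h : ∀ ℓ, (Finset.Icc (ν ℓ - k) (ν ℓ + k)).card = 2 * k + 1 := fun ℓ => by
    rw [Int.card_Icc]
    omega
  simp [cube, Fintype.card_piFinset, h]

theorem mem_cube_self (ν : Site d) (k : ℕ) : ν ∈ cube ν k := by
  simp [cube, Fintype.mem_piFinset]

variable {U : ℝ[X]} {K : ℝ} {M : ℝ} {x : Conf d}

theorem sum_le_Wen (hK : 0 ≤ K) (ν : Site d) (k : ℕ) :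
    ∑ i ∈ cube ν k, ((x i).2 ^ 2 / 2 + U.eval (x i).1 + 1) ≤ Wen U K ν k x := by
  refine le_add_of_nonneg_right (mul_nonneg (by positivity) ?_)
  refine Finset.sum_nonneg fun i _ => Finset.sum_nonneg fun j _ => ?_
  split_ifs <;> positivity

theorem one_le_site_energy (hUpos : ∀ y : ℝ, 0 ≤ U.eval y) (i : Site d) :
    1 ≤ (x i).2 ^ 2 / 2 + U.eval (x i).1 + 1 := by
  linarith [hUpos (x i).1, sq_nonneg (x i).2]

theorem pow_le_Wen (hUpos : ∀ y : ℝ, 0 ≤ U.eval y) (hK : 0 ≤ K) (ν : Site d) (k : ℕ) :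
    (2 * (k : ℝ) + 1) ^ d ≤ Wen U K ν k x := by
  refine le_trans ?_ (sum_le_Wen hK ν k)
  have := Finset.card_nsmul_le_sum (cube ν k) _ _ fun i _ => one_le_site_energy (x := x) hUpos i
  simpa [card_cube] using this

theorem site_energy_le_Wen (hUpos : ∀ y : ℝ, 0 ≤ U.eval y) (hK : 0 ≤ K) (ν : Site d) (k : ℕ) :
    (x ν).2 ^ 2 / 2 + U.eval (x ν).1 + 1 ≤ Wen U K ν k x :=
  (Finset.single_le_sum (fun i _ => zero_le_one.trans (one_le_site_energy hUpos i))
    (mem_cube_self ν k)).trans (sum_le_Wen hK ν k)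

theorem Wen_le_of_Qen_le (hUpos : ∀ y : ℝ, 0 ≤ U.eval y) (hK : 0 ≤ K)
    (hQ : Qen U K x ≤ ENNReal.ofReal M) {ν : Site d} {k : ℕ}
    (hk : log (exp 1 + lnorm ν) ^ ((1 : ℝ) / d) < k) :
    Wen U K ν k x ≤ M * (2 * (k : ℝ) + 1) ^ d := by
  have hpos : 0 < (2 * (k : ℝ) + 1) ^ d := by positivity
  have hle : ENNReal.ofReal (Wen U K ν k x / (2 * (k : ℝ) + 1) ^ d) ≤ ENNReal.ofReal M := by
    refine le_trans ?_ hQ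
    rw [Qen]
    exact le_iSup₂_of_le ν k (le_iSup_of_le hk le_rfl)
  have hW : 0 < Wen U K ν k x / (2 * (k : ℝ) + 1) ^ d :=
    div_pos (hpos.trans_le (pow_le_Wen hUpos hK ν k)) hpos
  rw [← div_le_iff₀ hpos]
  exact (ENNReal.ofReal_le_ofReal_iff'.mp hle).resolve_right hW.not_ge

theorem one_le_of_Qen_le (hUpos : ∀ y : ℝ, 0 ≤ U.eval y) (hK : 0 ≤ K)
    (hQ : Qen U K x ≤ ENNReal.ofReal M) : 1 ≤ M := by
  obtain ⟨k, hk, -⟩ :=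
    exists_nat_gt_rpow_and_pow_le (one_le_log_exp_one_add_lnorm 0) d
  have hpos : 0 < (2 * (k : ℝ) + 1) ^ d := by positivity
  have := (pow_le_Wen hUpos hK 0 k).trans (Wen_le_of_Qen_le hUpos hK hQ hk)
  nlinarith

theorem site_energy_le_of_Qen_le (hUpos : ∀ y : ℝ, 0 ≤ U.eval y) (hK : 0 ≤ K)
    (hQ : Qen U K x ≤ ENNReal.ofReal M) (i : Site d) :
    (x i).2 ^ 2 / 2 + U.eval (x i).1 + 1 ≤ 5 ^ d * (M * log (exp 1 + lnorm i)) := by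
  obtain ⟨k, hk, hk5⟩ :=
    exists_nat_gt_rpow_and_pow_le (one_le_log_exp_one_add_lnorm i) d
  have hM : 0 ≤ M := zero_le_one.trans (one_le_of_Qen_le hUpos hK hQ)
  calc (x i).2 ^ 2 / 2 + U.eval (x i).1 + 1 ≤ Wen U K i k x := site_energy_le_Wen hUpos hK i k
    _ ≤ M * (2 * (k : ℝ) + 1) ^ d := Wen_le_of_Qen_le hUpos hK hQ hk
    _ ≤ M * (5 ^ d * log (exp 1 + lnorm i)) := by gcongr
    _ = 5 ^ d * (M * log (exp 1 + lnorm i)) := by ring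

end Lattice

theorem statement6_general {d : ℕ} (U : Polynomial ℝ) (hUdeg : U.degree = 4)
    (hUpos : ∀ y : ℝ, 0 ≤ U.eval y)
    (K : ℝ) (hK : 0 < K) :
    ∃ C > (0:ℝ), ∀ (x : Conf d) (M : ℝ), Qen U K x ≤ ENNReal.ofReal M →
      ∀ i : Site d,
        (x i).2 ^ 2 + U.eval (x i).1 ≤
            C * M * Real.log (Real.exp 1 + (lnorm i : ℝ)) ∧
        (x i).1 ^ 4 ≤ C * M * Real.log (Real.exp 1 + (lnorm i : ℝ)) ∧
        |(Polynomial.derivative (Polynomial.derivative U)).eval (x i).1| ≤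
            C * Real.sqrt (M * Real.log (Real.exp 1 + (lnorm i : ℝ))) := by
  obtain ⟨C, hC, hbounds⟩ :=
    exists_coordinate_bounds_of_energy_le hUdeg hUpos (by positivity : (0 : ℝ) ≤ 5 ^ d)
  refine ⟨C, hC, fun x M hQ i => ?_⟩
  have hN : 1 ≤ M * log (exp 1 + lnorm i) := one_le_mul_of_one_le_of_one_le
    (one_le_of_Qen_le hUpos hK.le hQ) (one_le_log_exp_one_add_lnorm i)
  simpa only [mul_assoc] using
    hbounds (x i).2 (x i).1 _ hN (site_energy_le_of_Qen_le hUpos hK.le hQ i)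

/-- Pointwise coordinate bounds from the functional `Q`: if `Q(x) ≤ M` then
`p_i² + U(q_i) ≤ C M log(e+|i|)`, `q_i⁴ ≤ C M log(e+|i|)` and
`|U''(q_i)| ≤ C (M log(e+|i|))^{1/2}`, with `C` depending only on `d`, `U`, `K`. -/
theorem statement6 {d : ℕ} (hd : 0 < d) (U : Polynomial ℝ) (hUdeg : U.degree = 4)
    (hUpos : ∀ y : ℝ, 0 ≤ U.eval y) (hUlead : 0 < U.leadingCoeff)
    (K : ℝ) (hK : 0 < K) :
    ∃ C > (0:ℝ), ∀ (x : Conf d) (M : ℝ), Qen U K x ≤ ENNReal.ofReal M →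
      ∀ i : Site d,
        (x i).2 ^ 2 + U.eval (x i).1 ≤
            C * M * Real.log (Real.exp 1 + (lnorm i : ℝ)) ∧
        (x i).1 ^ 4 ≤ C * M * Real.log (Real.exp 1 + (lnorm i : ℝ)) ∧
        |(Polynomial.derivative (Polynomial.derivative U)).eval (x i).1| ≤
            C * Real.sqrt (M * Real.log (Real.exp 1 + (lnorm i : ℝ))) :=
  statement6_general U hUdeg hUpos K hK
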